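/- A stable configuration a is critical if and only if c_max − a is superstable, where c_max = (d₁⁺−1,...,d_n⁺−1). Consequently, the number of critical configurations equals the number of superstable configurations. -/

import Mathlib

/-- A finite directed multigraph without loops on `Fin (n+1)` with global sink `Fin.last n`. -/
structure SinkDigraph (n : ℕ) where
  e : Fin (n + 1) → Fin (n + 1) → ℕ
  loopless : ∀ i, e i i = 0
  sink_no_out : ∀ j, e (Fin.last n) j = 0
  path_to_sink : ∀ i, Relation.ReflTransGen (fun u v => 0 < e u v) i (Fin.last n)

namespace SinkDigraph

variable {n : ℕ}

/-- Out-degree of a vertex. -/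
def outDeg (G : SinkDigraph n) (i : Fin (n + 1)) : ℕ := ∑ j, G.e i j

/-- The (full) Laplacian matrix over ℤ. -/
def lap (G : SinkDigraph n) : Matrix (Fin (n + 1)) (Fin (n + 1)) ℤ :=
  Matrix.of fun i j => if i = j then (G.outDeg i : ℤ) else -(G.e i j : ℤ)

/-- The reduced Laplacian (rows/columns of the sink removed). -/
def redLap (G : SinkDigraph n) : Matrix (Fin n) (Fin n) ℤ :=
  Matrix.of fun i j => G.lap i.castSucc j.castSucc

/-- The reduced Laplacian over ℚ. -/
def redLapQ (G : SinkDigraph n) : Matrix (Fin n) (Fin n) ℚ :=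
  (G.redLap).map (Int.cast : ℤ → ℚ)

/-- A ℕ-script viewed as integer vector. -/
def natScript (σ : Fin n → ℕ) : Fin n → ℤ := fun i => (σ i : ℤ)

/-- Result of firing vertex `i` in configuration `a`. -/
def fire (G : SinkDigraph n) (a : Fin n → ℤ) (i : Fin n) : Fin n → ℤ :=
  fun j => a j - G.redLap i j

/-- Result of firing a sequence of vertices. -/
def applySeq (G : SinkDigraph n) : (Fin n → ℤ) → List (Fin n) → (Fin n → ℤ)
  | a, [] => a
  | a, i :: s => G.applySeq (G.fire a i) s

/-- A firing sequence is legal from `a` if every fired vertex is active when fired. -/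
def Legal (G : SinkDigraph n) : (Fin n → ℤ) → List (Fin n) → Prop
  | _, [] => True
  | a, i :: s => G.redLap i i ≤ a i ∧ G.Legal (G.fire a i) s

/-- The firing script of a firing sequence. -/
def script (s : List (Fin n)) : Fin n → ℤ := fun i => (s.count i : ℤ)

/-- A configuration is stable if it is non-negative and no vertex is active. -/
def IsStable (G : SinkDigraph n) (a : Fin n → ℤ) : Prop :=
  ∀ i, 0 ≤ a i ∧ a i < G.redLap i i

/-- `b` is the stabilization of `a`. -/
def Stabilizes (G : SinkDigraph n) (a b : Fin n → ℤ) : Prop :=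
  ∃ s : List (Fin n), G.Legal a s ∧ G.applySeq a s = b ∧ G.IsStable b

/-- The maximal stable configuration `c_max`. -/
def cmax (G : SinkDigraph n) : Fin n → ℤ := fun i => (G.outDeg i.castSucc : ℤ) - 1

/-- A stable configuration is critical if it is the stabilization of `c_max + c`
for some non-negative `c`. -/
def IsCritical (G : SinkDigraph n) (a : Fin n → ℤ) : Prop :=
  ∃ c : Fin n → ℤ, 0 ≤ c ∧ G.Stabilizes (G.cmax + c) a

/-- `σΔ ≻ 0`, i.e. `σΔ` is non-negative and non-zero. -/
def GPositive (G : SinkDigraph n) (σ : Fin n → ℕ) : Prop :=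
  0 ≤ Matrix.vecMul (natScript σ) G.redLap ∧ Matrix.vecMul (natScript σ) G.redLap ≠ 0

/-- Reachability along directed edges. -/
def Reach (G : SinkDigraph n) : Fin (n + 1) → Fin (n + 1) → Prop :=
  Relation.ReflTransGen (fun u v => 0 < G.e u v)

/-- A source component: a strongly connected component with no in-going edge from outside. -/
def IsSourceComponent (G : SinkDigraph n) (S : Set (Fin (n + 1))) : Prop :=
  (∃ i, S = {j | G.Reach i j ∧ G.Reach j i}) ∧ ∀ j ∉ S, ∀ k ∈ S, G.e j k = 0

/-- A `G`-strongly positive script. -/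
def GStronglyPositive (G : SinkDigraph n) (σ : Fin n → ℕ) : Prop :=
  G.GPositive σ ∧ ∀ S : Set (Fin (n + 1)), G.IsSourceComponent S →
    ∃ i : Fin n, i.castSucc ∈ S ∧ Matrix.vecMul (natScript σ) G.redLap i ≠ 0

/-- Linear equivalence of configurations. -/
def Equiv (G : SinkDigraph n) (a b : Fin n → ℤ) : Prop :=
  ∃ σ : Fin n → ℤ, b - a = Matrix.vecMul σ G.redLap

/-- The weight of a configuration. -/
def weight (a : Fin n → ℤ) : ℤ := ∑ i, a i

/-- The energy (CFG) order: compare energy vectors `aΔ⁻¹` componentwise over ℚ. -/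
def cfgLE (G : SinkDigraph n) (a b : Fin n → ℤ) : Prop :=
  Matrix.vecMul (fun i => (a i : ℚ)) (G.redLapQ)⁻¹ ≤
    Matrix.vecMul (fun i => (b i : ℚ)) (G.redLapQ)⁻¹

/-- A non-negative configuration is superstable if reverse-firing any nonzero ℕ-script
produces a negative component. -/
def IsSuperstable (G : SinkDigraph n) (a : Fin n → ℤ) : Prop :=
  0 ≤ a ∧ ∀ σ : Fin n → ℕ, σ ≠ 0 →
    ∃ i, a i - Matrix.vecMul (natScript σ) G.redLap i < 0

end SinkDigraph

/-!
The engine is a discrete maximum principle for the reduced Laplacian: `y Δ ≥ 0` forces `y ≥ 0`.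
Pairing `y Δ` with the indicator of `{y < 0}` shows that no edge leaves that set, which is
impossible since every vertex reaches the sink. In particular `Δ` is nonsingular, and the
adjugate yields a non-negative script `τ` with `τ Δ` as large as we like.

If `a` is the stabilization of `c_max + c` by a script `ρ` and `0 ≤ y` with `y Δ ≤ c_max - a`,
then `ρ - y ≥ 0` and firing `ρ - y` from `c_max + c` already leaves no vertex active, so the least
action principle gives `ρ ≤ ρ - y`, i.e. `y = 0`. Conversely, if `c_max - a` is superstable, fire
greedily from `a + τ Δ ≥ c_max` within the budget `τ`: the result `a + w Δ` with `w ≥ 0` is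
stable, so superstability forces `w = 0`. Hence `a ↦ c_max - a` maps the critical configurations
bijectively onto the superstable ones.
-/

namespace SinkDigraph

open Matrix

variable {n : ℕ} (G : SinkDigraph n)

lemma lap_apply (i j : Fin (n + 1)) :
    G.lap i j = (if i = j then (G.outDeg i : ℤ) else 0) - G.e i j := by
  by_cases h : i = j
  · subst h; simp [lap, G.loopless]
  · simp [lap, h]

lemma mulVec_lap_apply (x : Fin (n + 1) → ℤ) (i : Fin (n + 1)) :
    (G.lap *ᵥ x) i = ∑ k, (G.e i k : ℤ) * (x i - x k) := by
  simp [mulVec, dotProduct, lap_apply, sub_mul, mul_sub, Finset.sum_sub_distrib, outDeg,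
    Finset.sum_mul]

lemma redLap_mulVec_castSucc {x : Fin (n + 1) → ℤ} (hx : x (Fin.last n) = 0) (i : Fin n) :
    (G.redLap *ᵥ fun j => x j.castSucc) i = (G.lap *ᵥ x) i.castSucc := by
  simp [mulVec, dotProduct, Fin.sum_univ_castSucc, hx, redLap]

lemma redLap_self (i : Fin n) : G.redLap i i = G.cmax i + 1 := by
  simp [redLap, lap, cmax]

lemma redLap_nonpos {i j : Fin n} (h : i ≠ j) : G.redLap i j ≤ 0 := by
  simp [redLap, lap_apply, h]

lemma vecMul_redLap_nonpos {y : Fin n → ℤ} (hy : 0 ≤ y) {i : Fin n} (hi : y i = 0) :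
    (y ᵥ* G.redLap) i ≤ 0 := by
  simp only [vecMul, dotProduct]
  refine Finset.sum_nonpos fun j _ => ?_
  rcases eq_or_ne j i with rfl | hji
  · simp [hi]
  · exact mul_nonpos_of_nonneg_of_nonpos (hy j) (G.redLap_nonpos hji)

lemma last_of_edge_closed {p : Fin (n + 1) → Prop} (hp : ∀ u v, p u → 0 < G.e u v → p v)
    {u : Fin (n + 1)} (hu : p u) : p (Fin.last n) := by
  have hpath := G.path_to_sink u
  generalize Fin.last n = t at hpath
  induction hpath with
  | refl => exact hu
  | tail _ huv ih => exact hp _ _ ih huv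

theorem nonneg_of_nonneg_vecMul_redLap {y : Fin n → ℤ} (h : 0 ≤ y ᵥ* G.redLap) : 0 ≤ y := by
  by_contra hy
  obtain ⟨i₀, hi₀⟩ : ∃ i, y i < 0 := by simpa [Pi.le_def] using hy
  set χ : Fin (n + 1) → ℤ := Fin.snoc (α := fun _ => ℤ) (fun i => if y i < 0 then 1 else 0) 0
  have hχ : ∀ k, 0 ≤ χ k ∧ χ k ≤ 1 := fun k => by
    induction k using Fin.lastCases
    · simp [χ]
    · simp only [χ, Fin.snoc_castSucc]; split_ifs <;> simp
  have hχlast : χ (Fin.last n) = 0 := by simp [χ]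
  have hχi (i : Fin n) : χ i.castSucc = if y i < 0 then 1 else 0 := by simp [χ]
  have hterm (i : Fin n) : y i * (G.lap *ᵥ χ) i.castSucc ≤ 0 := by
    rw [mulVec_lap_apply, hχi]
    split_ifs with hi
    · exact mul_nonpos_of_nonpos_of_nonneg hi.le <| Finset.sum_nonneg fun k _ =>
        mul_nonneg (by positivity) (by linarith [hχ k])
    · exact mul_nonpos_of_nonneg_of_nonpos (not_lt.1 hi) <| Finset.sum_nonpos fun k _ =>
        mul_nonpos_of_nonneg_of_nonpos (by positivity) (by linarith [hχ k])
  have hsum : ∑ i, y i * (G.lap *ᵥ χ) i.castSucc = 0 := by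
    refine le_antisymm (Finset.sum_nonpos fun i _ => hterm i) ?_
    have := dotProduct_nonneg_of_nonneg h fun i => (hχ i.castSucc).1
    rw [← dotProduct_mulVec] at this
    simpa only [dotProduct, G.redLap_mulVec_castSucc hχlast] using this
  have hclosed (u v : Fin (n + 1)) (hu : χ u = 1) (huv : 0 < G.e u v) : χ v = 1 := by
    induction u using Fin.lastCases with
    | last => simp [hχlast] at hu
    | cast i =>
      have hi : y i < 0 := by by_contra hi; simp [hχi, hi] at hu
      have hzero := (Finset.sum_eq_zero_iff_of_nonpos fun i _ => hterm i).1 hsum i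
        (Finset.mem_univ _)
      rw [mulVec_lap_apply, hu, mul_eq_zero, or_iff_right hi.ne,
        Finset.sum_eq_zero_iff_of_nonneg fun k _ =>
          mul_nonneg (by positivity) (by linarith [hχ k])] at hzero
      have := hzero v (Finset.mem_univ _)
      rcases mul_eq_zero.1 this with he | hχv
      · omega
      · linarith
  have := G.last_of_edge_closed hclosed (u := i₀.castSucc) (by simp [hχi, hi₀])
  simp [hχlast] at this

lemma det_redLap_ne_zero : G.redLap.det ≠ 0 := by
  intro h
  obtain ⟨y, hy0, hy⟩ := exists_vecMul_eq_zero_iff.2 h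
  have hpos := G.nonneg_of_nonneg_vecMul_redLap hy.ge
  have hneg := G.nonneg_of_nonneg_vecMul_redLap (y := -y) (by rw [neg_vecMul, hy, neg_zero])
  exact hy0 (le_antisymm (neg_nonneg.1 hneg) hpos)

lemma exists_nonneg_one_le_vecMul_redLap : ∃ z : Fin n → ℤ, 0 ≤ z ∧ 1 ≤ z ᵥ* G.redLap := by
  set d := G.redLap.det
  have hz : (d.sign • (1 ᵥ* G.redLap.adjugate)) ᵥ* G.redLap = |d| • 1 := by
    rw [smul_vecMul, vecMul_vecMul, adjugate_mul, vecMul_smul, vecMul_one, smul_smul,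
      Int.sign_mul_self, Int.natCast_natAbs]
  have hd : 1 ≤ |d| := Int.one_le_abs G.det_redLap_ne_zero
  refine ⟨d.sign • (1 ᵥ* G.redLap.adjugate), G.nonneg_of_nonneg_vecMul_redLap ?_, ?_⟩
  · rw [hz]; exact fun i => by simp
  · rw [hz]; exact fun i => by simpa using hd

lemma exists_nonneg_le_vecMul_redLap (c : Fin n → ℤ) :
    ∃ τ : Fin n → ℤ, 0 ≤ τ ∧ c ≤ τ ᵥ* G.redLap := by
  obtain ⟨z, hz, hzΔ⟩ := G.exists_nonneg_one_le_vecMul_redLap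
  set K := ∑ i, |c i|
  have hK : 0 ≤ K := Finset.sum_nonneg fun i _ => abs_nonneg _
  refine ⟨K • z, smul_nonneg hK hz, fun i => ?_⟩
  have hci : c i ≤ K := (le_abs_self _).trans
    (Finset.single_le_sum (f := fun i => |c i|) (fun j _ => abs_nonneg _) (Finset.mem_univ i))
  rw [smul_vecMul, Pi.smul_apply, smul_eq_mul]
  have hzi : 1 ≤ (z ᵥ* G.redLap) i := hzΔ i
  nlinarith

lemma isStable_iff {a : Fin n → ℤ} : G.IsStable a ↔ 0 ≤ a ∧ a ≤ G.cmax := by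
  simp only [IsStable, redLap_self, Int.lt_add_one_iff, Pi.le_def, Pi.zero_apply, forall_and]

lemma fire_eq (a : Fin n → ℤ) (i : Fin n) : G.fire a i = a - Pi.single i 1 ᵥ* G.redLap := by
  rw [single_one_vecMul]; rfl

lemma script_nil : script ([] : List (Fin n)) = 0 := by
  ext; simp [script]

lemma script_cons (i : Fin n) (s : List (Fin n)) :
    script (i :: s) = Pi.single i 1 + script s := by
  ext j
  rcases eq_or_ne j i with rfl | hji
  · simp [script]; omega
  · simp [script, hji, hji.symm]

lemma applySeq_eq (a : Fin n → ℤ) (s : List (Fin n)) :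
    G.applySeq a s = a - script s ᵥ* G.redLap := by
  induction s generalizing a with
  | nil => simp [applySeq, script_nil]
  | cons i s ih =>
    rw [applySeq, ih, fire_eq, script_cons, add_vecMul]
    abel

lemma applySeq_nonneg {a : Fin n → ℤ} {s : List (Fin n)} (ha : 0 ≤ a) (hs : G.Legal a s) :
    0 ≤ G.applySeq a s := by
  induction s generalizing a with
  | nil => exact ha
  | cons i s ih =>
    refine ih (fun j => ?_) hs.2
    rcases eq_or_ne i j with rfl | hij
    · exact sub_nonneg.2 hs.1
    · linarith [ha j, G.redLap_nonpos hij, show G.fire a i j = a j - G.redLap i j from rfl]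

/-- The least action principle. -/
theorem script_le_of_legal {b σ : Fin n → ℤ} {s : List (Fin n)} (hs : G.Legal b s) (hσ : 0 ≤ σ)
    (hstable : b - σ ᵥ* G.redLap ≤ G.cmax) : script s ≤ σ := by
  induction s generalizing b σ with
  | nil => simpa [script_nil] using hσ
  | cons i s ih =>
    have hσi : 1 ≤ σ i := by
      by_contra hσi
      have := G.vecMul_redLap_nonpos hσ (i := i) (by have := hσ i; simp at this ⊢; omega)
      have := hstable i
      have := hs.1
      simp only [Pi.sub_apply, redLap_self] at *
      omega
    have hσ' : 0 ≤ σ - Pi.single i 1 := fun j => by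
      rcases eq_or_ne j i with rfl | hji
      · simpa using hσi
      · simpa [hji] using hσ j
    have hstable' : G.fire b i - (σ - Pi.single i 1) ᵥ* G.redLap ≤ G.cmax := by
      rwa [fire_eq, sub_vecMul, sub_sub_sub_cancel_right]
    rw [script_cons]
    exact le_sub_iff_add_le'.1 (ih hs.2 hσ' hstable')

lemma exists_legal_script_le (b τ : Fin n → ℤ) (hτ : 0 ≤ τ) :
    ∃ s : List (Fin n), G.Legal b s ∧ script s ≤ τ ∧
      ∀ i, G.cmax i < G.applySeq b s i → script s i = τ i := by
  obtain ⟨N, hN⟩ : ∃ N : ℕ, ∑ i, τ i < N := ⟨(∑ i, τ i).toNat + 1, by omega⟩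
  induction N generalizing b τ with
  | zero => exact absurd (Finset.sum_nonneg fun i _ => hτ i) (by simpa using hN)
  | succ N ih =>
    by_cases h : ∃ i, G.cmax i < b i ∧ 0 < τ i
    · obtain ⟨i, hbi, hτi⟩ := h
      have hτ' : 0 ≤ τ - Pi.single i 1 := fun j => by
        rcases eq_or_ne j i with rfl | hji
        · simp; omega
        · simpa [hji] using hτ j
      obtain ⟨s, hs, hsτ, hmax⟩ := ih (G.fire b i) (τ - Pi.single i 1) hτ' (by
        simp only [Pi.sub_apply, Finset.sum_sub_distrib, Finset.sum_pi_single', Finset.mem_univ,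
          if_true]
        omega)
      refine ⟨i :: s, ⟨by rw [redLap_self]; omega, hs⟩, ?_, fun j hj => ?_⟩
      · rw [script_cons]; exact le_sub_iff_add_le'.1 hsτ
      · rw [script_cons, Pi.add_apply, hmax j hj, Pi.sub_apply]; abel
    · push Not at h
      refine ⟨[], trivial, by rwa [script_nil], fun i hi => ?_⟩
      have := h i hi
      have := hτ i
      simp only [script_nil, Pi.zero_apply] at *
      omega

lemma isSuperstable_iff {a : Fin n → ℤ} :
    G.IsSuperstable a ↔ 0 ≤ a ∧ ∀ y : Fin n → ℤ, 0 ≤ y → y ᵥ* G.redLap ≤ a → y = 0 := by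
  have hcast : ∀ y : Fin n → ℤ, 0 ≤ y → natScript (fun i => (y i).toNat) = y :=
    fun y hy => funext fun i => Int.toNat_of_nonneg (hy i)
  refine and_congr_right fun _ => ⟨fun h y hy hya => ?_, fun h σ hσ => ?_⟩
  · by_contra hy0
    obtain ⟨i, hi⟩ := h (fun i => (y i).toNat) (fun h0 => hy0 (by rw [← hcast y hy, h0]; rfl))
    rw [hcast y hy] at hi
    linarith [hya i]
  · by_contra hσa
    push Not at hσa
    refine hσ (funext fun i => ?_)
    have := congrFun (h (natScript σ) (fun i => Int.natCast_nonneg _) (fun i => by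
      linarith [hσa i])) i
    simpa [natScript] using this

theorem isSuperstable_cmax_sub_of_isCritical {a : Fin n → ℤ} (hc : G.IsCritical a) :
    G.IsSuperstable (G.cmax - a) := by
  obtain ⟨c, hc, s, hs, rfl, hstable⟩ := hc
  rw [applySeq_eq] at hstable ⊢
  rw [isStable_iff] at hstable
  refine G.isSuperstable_iff.2 ⟨sub_nonneg.2 hstable.2, fun y hy hya => ?_⟩
  have hρy : 0 ≤ script s - y := G.nonneg_of_nonneg_vecMul_redLap fun i => by
    have := hya i
    have := hc i
    simp only [sub_vecMul, Pi.sub_apply, Pi.add_apply, Pi.zero_apply] at *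
    linarith
  have hle := G.script_le_of_legal hs hρy fun i => by
    have := hya i
    simp only [sub_vecMul, Pi.sub_apply, Pi.add_apply] at *
    linarith
  refine le_antisymm (fun i => ?_) hy
  have := hle i
  simp only [Pi.sub_apply, Pi.zero_apply] at this ⊢
  linarith

theorem isCritical_of_isSuperstable_cmax_sub {a : Fin n → ℤ} (ha : G.IsStable a)
    (hs : G.IsSuperstable (G.cmax - a)) : G.IsCritical a := by
  obtain ⟨τ, hτ, hτa⟩ := G.exists_nonneg_le_vecMul_redLap (G.cmax - a)
  set b := a + τ ᵥ* G.redLap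
  have hb : G.cmax ≤ b := fun i => by
    have := hτa i
    simp only [Pi.sub_apply] at this
    simp only [b, Pi.add_apply]
    linarith
  obtain ⟨s, hleg, hsτ, hmax⟩ := G.exists_legal_script_le b τ hτ
  have hr : G.applySeq b s = a + (τ - script s) ᵥ* G.redLap := by
    rw [applySeq_eq, sub_vecMul]; simp only [b]; abel
  have hw : 0 ≤ τ - script s := sub_nonneg.2 hsτ
  have hr_le : G.applySeq b s ≤ G.cmax := fun i => by
    by_contra hi
    have hwi : (τ - script s) i = 0 := by simp [hmax i (not_le.1 hi)]
    have := G.vecMul_redLap_nonpos hw hwi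
    have := ((G.isStable_iff.1 ha).2 i)
    rw [hr] at hi
    simp only [Pi.add_apply] at hi
    linarith
  have hw0 : τ - script s = 0 := (G.isSuperstable_iff.1 hs).2 _ hw fun i => by
    have := hr_le i
    rw [hr] at this
    simp only [Pi.add_apply, Pi.sub_apply] at this ⊢
    linarith
  refine ⟨b - G.cmax, sub_nonneg.2 hb, s, ?_⟩
  rw [add_sub_cancel, hr, hw0, zero_vecMul, add_zero]
  exact ⟨hleg, rfl, ha⟩

lemma isStable_cmax_sub_of_isSuperstable {d : Fin n → ℤ} (hd : G.IsSuperstable d) :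
    G.IsStable (G.cmax - d) := by
  obtain ⟨hd0, hd⟩ := G.isSuperstable_iff.1 hd
  refine G.isStable_iff.2 ⟨sub_nonneg.2 fun i => ?_, sub_le_self _ hd0⟩
  by_contra hi
  refine one_ne_zero (by simpa using congrFun (hd (Pi.single i 1)
    (Pi.single_nonneg.2 zero_le_one) ?_) i : (1 : ℤ) = 0)
  rw [single_one_vecMul]
  intro j
  rcases eq_or_ne i j with rfl | hij
  · simp only [row_apply, redLap_self]; linarith
  · exact (G.redLap_nonpos hij).trans (hd0 j)

end SinkDigraph

open SinkDigraph Matrix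

theorem duality (n : ℕ) (G : SinkDigraph n) :
    (∀ a : Fin n → ℤ, G.IsStable a →
      (G.IsCritical a ↔ G.IsSuperstable (G.cmax - a))) ∧
    {a : Fin n → ℤ | G.IsCritical a}.ncard = {a : Fin n → ℤ | G.IsSuperstable a}.ncard := by
  have key (a : Fin n → ℤ) (ha : G.IsStable a) :
      G.IsCritical a ↔ G.IsSuperstable (G.cmax - a) :=
    ⟨G.isSuperstable_cmax_sub_of_isCritical, G.isCritical_of_isSuperstable_cmax_sub ha⟩
  refine ⟨key, ?_⟩
  have himage : (G.cmax - ·) '' {a | G.IsCritical a} = {d | G.IsSuperstable d} := by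
    ext d
    refine ⟨?_, fun hd => ⟨G.cmax - d, ?_, sub_sub_cancel _ _⟩⟩
    · rintro ⟨a, ha, rfl⟩
      exact G.isSuperstable_cmax_sub_of_isCritical ha
    · exact (key _ (G.isStable_cmax_sub_of_isSuperstable hd)).2 (by rwa [sub_sub_cancel])
  rw [← himage, Set.ncard_image_of_injective _ sub_right_injective]
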